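/- Let n > m > ℓ ≥ 2 be integers and let H = ⟨a, b, c | a^(2^n) = 1, b^(2^m) = a^(2^m), c^(2^ℓ) = 1, [b,a] = c, [c,a] = c^(-2), [c,b] = c^(-2)⟩. Let S be a commutative ring of characteristic 4 with a maximal ideal n satisfying 2 ∈ n and 2 ∉ n². Set A = a − 1 in SH and Θ = Δ(SH : n). Then A^(2^(m+1)) ∉ Θ^(1 + 2^(m+1)). -/

import Mathlib

/-- Relators of the group `H` from the paper:
`H = ⟨a,b,c ∣ a^(2^n) = 1, b^(2^m) = a^(2^m), c^(2^l) = 1, [b,a] = c, [c,a] = c⁻², [c,b] = c⁻²⟩`,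
where `[g,h] = g⁻¹h⁻¹gh`.  Generators: `0 ↦ a`, `1 ↦ b`, `2 ↦ c`. -/
def hrels (n m l : ℕ) : Set (FreeGroup (Fin 3)) :=
  {FreeGroup.of 0 ^ 2 ^ n, FreeGroup.of 1 ^ 2 ^ m * (FreeGroup.of 0 ^ 2 ^ m)⁻¹,
   FreeGroup.of 2 ^ 2 ^ l,
   (FreeGroup.of 1)⁻¹ * (FreeGroup.of 0)⁻¹ * FreeGroup.of 1 * FreeGroup.of 0 * (FreeGroup.of 2)⁻¹,
   (FreeGroup.of 2)⁻¹ * (FreeGroup.of 0)⁻¹ * FreeGroup.of 2 * FreeGroup.of 0 * FreeGroup.of 2 ^ 2,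
   (FreeGroup.of 2)⁻¹ * (FreeGroup.of 1)⁻¹ * FreeGroup.of 2 * FreeGroup.of 1 * FreeGroup.of 2 ^ 2}

/-- The group `H` of the paper. -/
def GrpH (n m l : ℕ) : Type := PresentedGroup (hrels n m l)

instance (n m l : ℕ) : Group (GrpH n m l) := by unfold GrpH; infer_instance

/-- The augmentation map `ε : SH → S`, sending `Σ α_h h` to `Σ α_h`. -/
noncomputable def aug (S : Type) [CommRing S] (G : Type) [Group G] :
    MonoidAlgebra S G →ₐ[S] S := MonoidAlgebra.lift S S G 1

/-- The relative augmentation ideal `Δ(SG : n) = ε⁻¹(n) = {x ∈ SG : ε(x) ∈ n}`. -/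
noncomputable def relAugIdeal (S : Type) [CommRing S] (nn : Ideal S) (G : Type) [Group G] :
    Ideal (MonoidAlgebra S G) := Ideal.comap (aug S G) nn

/-- `A = a - 1 ∈ SH`. -/
noncomputable def elA (S : Type) [CommRing S] (n m l : ℕ) : MonoidAlgebra S (GrpH n m l) :=
  MonoidAlgebra.of S (GrpH n m l) (PresentedGroup.of 0) - 1
/-- `B = b - 1 ∈ SH`. -/
noncomputable def elB (S : Type) [CommRing S] (n m l : ℕ) : MonoidAlgebra S (GrpH n m l) :=
  MonoidAlgebra.of S (GrpH n m l) (PresentedGroup.of 1) - 1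
/-- `C = c - 1 ∈ SH`. -/
noncomputable def elC (S : Type) [CommRing S] (n m l : ℕ) : MonoidAlgebra S (GrpH n m l) :=
  MonoidAlgebra.of S (GrpH n m l) (PresentedGroup.of 2) - 1


/-!
Send `SH` to `TC`, where `T = S ⧸ n²` and `C = ⟨g⟩` is cyclic of order `2 ^ (m + 1)`
(`a, b ↦ g`, `c ↦ 1`; this is where `m < n` enters). The image of `Θ` lies in `P ⊔ Q`, where
`P = n̄ · TC` has `P * P = ⊥` and `Q = (g - 1)`. As `4 = 0`, `x := (g - 1) ^ 2 ^ (m + 1)` equals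
`2 * (1 - g ^ 2 ^ m)`, so `x ^ 2 = 0` and `P ⊔ Q` is nilpotent. Since `P * P = ⊥`,
`(P ⊔ Q) ^ (1 + 2 ^ (m + 1)) ≤ Q ^ 2 ^ (m + 1) * (P ⊔ Q) = x * (P ⊔ Q)`, so membership of `x`
would give `x = x * y` with `y` nilpotent, i.e. `x = 0`. But the coefficient of `1` in `x` is `2`,
which is nonzero in `T` because `2 ∉ n²`.
-/

namespace Ideal

theorem map_pow' {R S F : Type*} [Semiring R] [CommSemiring S] [FunLike F R S]
    [RingHomClass F R S] (f : F) (I : Ideal R) (n : ℕ) : (I ^ n).map f = I.map f ^ n := by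
  induction n with
  | zero => rw [pow_zero, Submodule.pow_zero, one_eq_top, one_eq_top, map_top]
  | succ n ih => rw [pow_succ, Submodule.pow_succ, Ideal.map_mul, ih]

section CommSemiring

variable {R : Type*} [CommSemiring R]

theorem sup_pow_succ_le_of_mul_self_eq_bot {P Q : Ideal R} (hP : P * P = ⊥) (j : ℕ) :
    (P ⊔ Q) ^ (j + 1) ≤ Q ^ j * (P ⊔ Q) := by
  induction j with
  | zero => simp
  | succ j ih =>
    have hsq : (P ⊔ Q) * (P ⊔ Q) ≤ Q * (P ⊔ Q) := by
      rw [sup_mul, mul_sup, mul_sup]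
      refine sup_le (sup_le ?_ ?_) le_rfl
      · rw [hP]; exact bot_le
      · rw [mul_comm]; exact le_sup_left
    calc (P ⊔ Q) ^ (j + 1 + 1) = (P ⊔ Q) ^ (j + 1) * (P ⊔ Q) := pow_succ _ _
      _ ≤ Q ^ j * ((P ⊔ Q) * (P ⊔ Q)) := by rw [← mul_assoc]; exact mul_mono_left ih
      _ ≤ Q ^ (j + 1) * (P ⊔ Q) := by
        rw [pow_succ, mul_assoc]; exact mul_mono_right hsq

theorem eq_bot_of_le_mul_of_pow_eq_bot {I J : Ideal R} (hI : I ≤ I * J) {k : ℕ}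
    (hJ : J ^ k = ⊥) : I = ⊥ := by
  have hIk : ∀ j : ℕ, I ≤ I * J ^ j := by
    intro j
    induction j with
    | zero => simp
    | succ j ih =>
      calc I ≤ I * J ^ j := ih
        _ ≤ I * J * J ^ j := mul_mono_left hI
        _ = I * J ^ (j + 1) := by rw [mul_assoc, ← pow_succ']
  simpa [hJ] using hIk k

end CommSemiring

end Ideal

theorem sub_one_pow_two_pow_succ {R : Type*} [CommRing R] (h4 : (4 : R) = 0) (x : R) (k : ℕ) :
    (x - 1) ^ 2 ^ (k + 1) = x ^ 2 ^ (k + 1) - 1 + 2 * (1 - x ^ 2 ^ k) := by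
  induction k with
  | zero => ring
  | succ k ih =>
    rw [pow_succ 2 (k + 1), pow_mul, ih, pow_mul, pow_succ 2 k, pow_mul]
    linear_combination h4 * ((1 - x ^ 2 ^ k) * (x ^ 2 ^ k) ^ 2 - x ^ 2 ^ k + (x ^ 2 ^ k) ^ 2)

open MonoidAlgebra

section GroupAlgebra

variable {k G k' G' : Type} [CommRing k] [Group G] [CommRing k'] [Group G']

theorem aug_single (g : G) (r : k) : aug k G (single g r) = r := by
  simp [aug, lift_single]

theorem aug_of (g : G) : aug k G (of k G g) = 1 := aug_single g 1

theorem of_sub_one_mem_span_of_closure_eq_top {s : Set G} (hs : Subgroup.closure s = ⊤)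
    (g : G) : of k G g - 1 ∈ Ideal.span ((fun x => of k G x - 1) '' s) := by
  set J := Ideal.span ((fun x => of k G x - 1) '' s)
  let K : Subgroup G :=
    { carrier := {x | of k G x - 1 ∈ J}
      one_mem' := by simp only [Set.mem_ofPred_eq, map_one, sub_self, zero_mem]
      mul_mem' := fun {x y} hx hy => by
        have h : of k G (x * y) - 1 = of k G x * (of k G y - 1) + (of k G x - 1) := by
          rw [map_mul, mul_sub, mul_one, sub_add_sub_cancel]
        simpa only [Set.mem_ofPred_eq, h] using add_mem (J.mul_mem_left _ hy) hx
      inv_mem' := fun {x} hx => by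
        have h : of k G x⁻¹ - 1 = -(of k G x⁻¹ * (of k G x - 1)) := by
          rw [mul_sub, ← map_mul, inv_mul_cancel, map_one, mul_one, neg_sub]
        simpa only [Set.mem_ofPred_eq, h] using neg_mem (J.mul_mem_left _ hx) }
  have hsK : s ⊆ K := fun x hx => Ideal.subset_span ⟨x, hx, rfl⟩
  exact (Subgroup.closure_le K).mpr hsK (hs ▸ Subgroup.mem_top g)

theorem sub_algebraMap_aug_mem_span_of_closure_eq_top {s : Set G}
    (hs : Subgroup.closure s = ⊤) (x : MonoidAlgebra k G) :
    x - algebraMap k _ (aug k G x) ∈ Ideal.span ((fun x => of k G x - 1) '' s) := by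
  induction x using MonoidAlgebra.induction_on with
  | of g => simpa only [aug_of, map_one] using of_sub_one_mem_span_of_closure_eq_top hs g
  | add x y hx hy =>
    rw [map_add, map_add, add_sub_add_comm]; exact add_mem hx hy
  | smul r x hx =>
    rw [map_smul, smul_eq_mul, map_mul, Algebra.smul_def, ← mul_sub]
    exact Ideal.mul_mem_left _ _ hx

theorem relAugIdeal_le_map_sup_span {s : Set G} (hs : Subgroup.closure s = ⊤) (I : Ideal k) :
    relAugIdeal k I G ≤
      I.map (algebraMap k (MonoidAlgebra k G)) ⊔ Ideal.span ((fun x => of k G x - 1) '' s) := by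
  intro x hx
  rw [← add_sub_cancel (algebraMap k _ (aug k G x)) x]
  exact Submodule.add_mem_sup (Ideal.mem_map_of_mem _ hx)
    (sub_algebraMap_aug_mem_span_of_closure_eq_top hs x)

theorem mapRingHom_mapDomainRingHom_of (f : k →+* k') (φ : G →* G') (g : G) :
    mapRingHom G' f (mapDomainRingHom k φ (of k G g)) = of k' G' (φ g) := by
  simp [mapDomain_single, mapRingHom_single]

theorem aug_mapRingHom_mapDomainRingHom (f : k →+* k') (φ : G →* G') (x : MonoidAlgebra k G) :
    aug k' G' (mapRingHom G' f (mapDomainRingHom k φ x)) = f (aug k G x) := by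
  induction x using MonoidAlgebra.induction_linear with
  | zero => simp
  | add x y hx hy => simp only [map_add, hx, hy]
  | single g r => simp [aug_single, mapDomain_single, mapRingHom_single]

theorem map_relAugIdeal_le (f : k →+* k') (φ : G →* G') (I : Ideal k) :
    (relAugIdeal k I G).map ((mapRingHom G' f).comp (mapDomainRingHom k φ)) ≤
      relAugIdeal k' (I.map f) G' := by
  rw [Ideal.map_le_iff_le_comap]
  intro x hx
  change aug k' G' (mapRingHom G' f (mapDomainRingHom k φ x)) ∈ I.map f
  rw [aug_mapRingHom_mapDomainRingHom]
  exact Ideal.mem_map_of_mem f hx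

end GroupAlgebra

section CyclicTwoGroup

variable {T G : Type} [CommRing T] [CommGroup G]

theorem MonoidAlgebra.four_eq_zero (h4 : (4 : T) = 0) : (4 : MonoidAlgebra T G) = 0 := by
  rw [← map_ofNat (algebraMap T (MonoidAlgebra T G)) 4, h4, map_zero]

theorem of_sub_one_pow_two_pow_succ (h4 : (4 : T) = 0) {g : G} {k : ℕ}
    (hg : g ^ 2 ^ (k + 1) = 1) :
    (of T G g - 1) ^ 2 ^ (k + 1) = 2 * (1 - of T G (g ^ 2 ^ k)) := by
  rw [sub_one_pow_two_pow_succ (MonoidAlgebra.four_eq_zero h4), ← map_pow, ← map_pow, hg,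
    map_one, sub_self, zero_add]

theorem two_mul_one_sub_of_ne_zero (h2 : (2 : T) ≠ 0) {g : G} (hg : g ≠ 1) :
    (2 : MonoidAlgebra T G) * (1 - of T G g) ≠ 0 := by
  intro h
  refine h2 ?_
  simpa [two_mul, one_def, hg.symm, one_add_one_eq_two] using congrArg (fun x => x.coeff 1) h

theorem of_sub_one_pow_two_pow_succ_notMem_relAugIdeal_pow (h4 : (4 : T) = 0) (h2 : (2 : T) ≠ 0)
    {I : Ideal T} (hI : I * I = ⊥) {g : G} (hgen : Subgroup.closure {g} = ⊤) {k : ℕ}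
    (hg : g ^ 2 ^ (k + 1) = 1) (hg' : g ^ 2 ^ k ≠ 1) :
    (of T G g - 1) ^ 2 ^ (k + 1) ∉ relAugIdeal T I G ^ (1 + 2 ^ (k + 1)) := by
  set x := (of T G g - 1) ^ 2 ^ (k + 1)
  have hx : x = 2 * (1 - of T G (g ^ 2 ^ k)) := of_sub_one_pow_two_pow_succ h4 hg
  set P := I.map (algebraMap T (MonoidAlgebra T G))
  set Q := Ideal.span {of T G g - 1}
  have hP : P * P = ⊥ := by rw [← Ideal.map_mul, hI, Ideal.map_bot]
  have hQ : Q ^ 2 ^ (k + 1) = Ideal.span {x} := Ideal.span_singleton_pow _ _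
  have hΘ : relAugIdeal T I G ≤ P ⊔ Q := by
    simpa only [Set.image_singleton] using relAugIdeal_le_map_sup_span hgen I
  have hnil : (P ⊔ Q) ^ (2 ^ (k + 1) * 2 + 1) = ⊥ := by
    refine le_bot_iff.mp ((Ideal.sup_pow_succ_le_of_mul_self_eq_bot hP _).trans ?_)
    have hx2 : x ^ 2 = 4 * (1 - of T G (g ^ 2 ^ k)) ^ 2 := by rw [hx]; ring
    rw [pow_mul, hQ, Ideal.span_singleton_pow, hx2, MonoidAlgebra.four_eq_zero h4, zero_mul,
      Ideal.span_singleton_eq_bot.mpr rfl, Ideal.bot_mul]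
  intro hmem
  have hle : Ideal.span {x} ≤ Ideal.span {x} * (P ⊔ Q) := by
    rw [Ideal.span_singleton_le_iff_mem, ← hQ]
    rw [add_comm] at hmem
    exact Ideal.sup_pow_succ_le_of_mul_self_eq_bot hP _ (Ideal.pow_right_mono hΘ _ hmem)
  exact two_mul_one_sub_of_ne_zero h2 hg' (hx ▸ Ideal.span_singleton_eq_bot.mp
    (Ideal.eq_bot_of_le_mul_of_pow_eq_bot hle hnil))

end CyclicTwoGroup

theorem ofAdd_one_pow_eq_one_iff {N j : ℕ} :
    Multiplicative.ofAdd (1 : ZMod N) ^ j = 1 ↔ N ∣ j := by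
  rw [← orderOf_dvd_iff_pow_eq_one, orderOf_ofAdd_eq_addOrderOf, ZMod.addOrderOf_one]

theorem closure_ofAdd_one_eq_top (N : ℕ) :
    Subgroup.closure {Multiplicative.ofAdd (1 : ZMod N)} = ⊤ := by
  rw [← Subgroup.zpowers_eq_closure, eq_top_iff]
  rintro x -
  obtain ⟨i, hi⟩ := ZMod.intCast_surjective (Multiplicative.toAdd x)
  refine ⟨i, ?_⟩
  change _ ^ i = x
  rw [← ofAdd_zsmul, zsmul_one, hi, ofAdd_toAdd]

def GrpH.toCyclic (n m l k : ℕ) (hk : k ≤ n) : GrpH n m l →* Multiplicative (ZMod (2 ^ k)) :=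
  PresentedGroup.toGroup (f := fun i => if i = 2 then 1 else Multiplicative.ofAdd 1) <| by
    have ha : Multiplicative.ofAdd (1 : ZMod (2 ^ k)) ^ 2 ^ n = 1 :=
      ofAdd_one_pow_eq_one_iff.mpr (pow_dvd_pow 2 hk)
    rintro r (rfl | rfl | rfl | rfl | rfl | rfl) <;> simp [ha]

theorem GrpH.toCyclic_of_zero (n m l k : ℕ) (hk : k ≤ n) :
    GrpH.toCyclic n m l k hk (PresentedGroup.of 0) = Multiplicative.ofAdd 1 :=
  PresentedGroup.toGroup.of _

theorem stmt15_general (n m l : ℕ) (h1 : n > m)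
    (S : Type) [CommRing S] (hchar : CharP S 4)
    (nn : Ideal S) (h2n2 : (2 : S) ∉ nn ^ 2) :
    elA S n m l ^ 2 ^ (m + 1) ∉ relAugIdeal S nn (GrpH n m l) ^ (1 + 2 ^ (m + 1)) := by
  set q := Ideal.Quotient.mk (nn ^ 2)
  set Φ := (mapRingHom _ q).comp (mapDomainRingHom S (GrpH.toCyclic n m l (m + 1) h1))
  have h4 : (4 : S ⧸ nn ^ 2) = 0 := by rw [← map_ofNat q 4, CharP.ofNat_eq_zero S 4, map_zero]
  have h2 : (2 : S ⧸ nn ^ 2) ≠ 0 := by rwa [← map_ofNat q, Ne, Ideal.Quotient.eq_zero_iff_mem]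
  have hsq : nn.map q * nn.map q = ⊥ := by
    rw [← Ideal.map_mul, ← pow_two, Ideal.map_quotient_self]
  have hA : Φ (elA S n m l) = of _ _ (Multiplicative.ofAdd 1) - 1 := by
    rw [elA, map_sub, map_one, ← GrpH.toCyclic_of_zero n m l (m + 1) h1]
    exact congrArg (· - 1) (mapRingHom_mapDomainRingHom_of q _ _)
  intro hmem
  refine of_sub_one_pow_two_pow_succ_notMem_relAugIdeal_pow (k := m) h4 h2 hsq
    (closure_ofAdd_one_eq_top _) (ofAdd_one_pow_eq_one_iff.mpr dvd_rfl)
    (ofAdd_one_pow_eq_one_iff.not.mpr (Nat.pow_dvd_pow_iff_le_right'.not.mpr (by omega))) ?_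
  rw [← hA, ← map_pow]
  refine Ideal.pow_right_mono (map_relAugIdeal_le q (GrpH.toCyclic n m l (m + 1) h1) nn) _ ?_
  rw [← Ideal.map_pow']
  exact Ideal.mem_map_of_mem Φ hmem

theorem stmt15 (n m l : ℕ) (h1 : n > m) (h2 : m > l) (h3 : 2 ≤ l)
    (S : Type) [CommRing S] (hchar : CharP S 4)
    (nn : Ideal S) (hnn : nn.IsMaximal) (h2n : (2 : S) ∈ nn) (h2n2 : (2 : S) ∉ nn ^ 2) :
    elA S n m l ^ 2 ^ (m + 1) ∉ relAugIdeal S nn (GrpH n m l) ^ (1 + 2 ^ (m + 1)) :=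
  stmt15_general n m l h1 S hchar nn h2n2
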